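/- arXiv:2008.00571 — 6 statements merged into one kernel-verified Lean document; each statement's English description precedes it below -/
import Mathlib

section
/- Let (α₂₁⁽ˡ⁾, α₂₂⁽ˡ⁾) be defined recursively by α₂₁⁽¹⁾ = e₁γ₁⁻, α₂₂⁽¹⁾ = γ₁⁺, and α₂₁⁽ˡ⁾ = α₂₁⁽ˡ⁻¹⁾γₗ⁺eₗ₋₁eₗ + α₂₂⁽ˡ⁻¹⁾γₗ⁻eₗ, α₂₂⁽ˡ⁾ = α₂₁⁽ˡ⁻¹⁾γₗ⁻eₗ₋₁ + α₂₂⁽ˡ⁻¹⁾γₗ⁺, where each γₗ⁺, γₗ⁻ are real with |γₗ⁺| > |γₗ⁻| and each eₗ ∈ ℂ with |eₗ| ≤ 1. Then for every ℓ ≥ 1, |α₂₂⁽ˡ⁾|² - |α₂₁⁽ˡ⁾|² ≥ ∏_{j=1}^{ℓ} (|γⱼ⁺|² - |γⱼ⁻|²) > 0. -/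
/-!
Up to the contractions `eₗ₋₁`, `eₗ`, one step of the recursion is the hyperbolic rotation
`(x, y) ↦ (γ⁺ x + γ⁻ y, γ⁻ x + γ⁺ y)` applied to `(eₗ₋₁ α₂₁, α₂₂)`, which multiplies the
indefinite form `|y|² - |x|²` exactly by `(γ⁺)² - (γ⁻)² > 0`. Both contractions only shrink the
`α₂₁`-component, so they can only increase the form. The first step is the step from `(0, 1)`.
-/

open Complex

lemma sq_norm_sub_sq_norm_hyperbolic (a b f : ℂ) (p m : ℝ) :
    ‖a * m * f + b * p‖ ^ 2 - ‖a * p * f + b * m‖ ^ 2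
      = (p ^ 2 - m ^ 2) * (‖b‖ ^ 2 - ‖a‖ ^ 2 * ‖f‖ ^ 2) := by
  simp only [Complex.sq_norm, normSq_apply, add_re, add_im, mul_re, mul_im, ofReal_re, ofReal_im]
  ring

lemma mul_sq_norm_sub_sq_norm_le_step (a b f g : ℂ) {p m : ℝ}
    (hf : ‖f‖ ≤ 1) (hg : ‖g‖ ≤ 1) (hpm : m ^ 2 ≤ p ^ 2) :
    (p ^ 2 - m ^ 2) * (‖b‖ ^ 2 - ‖a‖ ^ 2)
      ≤ ‖a * m * f + b * p‖ ^ 2 - ‖a * p * f * g + b * m * g‖ ^ 2 := by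
  have hf2 : ‖f‖ ^ 2 ≤ 1 := pow_le_one₀ (norm_nonneg f) hf
  have hg2 : ‖g‖ ^ 2 ≤ 1 := pow_le_one₀ (norm_nonneg g) hg
  have hrotated : ‖(a * p * f + b * m) * g‖ ^ 2 ≤ ‖a * p * f + b * m‖ ^ 2 := by
    rw [norm_mul, mul_pow]
    exact mul_le_of_le_one_right (by positivity) hg2
  have hshrink : ‖a‖ ^ 2 * ‖f‖ ^ 2 ≤ ‖a‖ ^ 2 := mul_le_of_le_one_right (by positivity) hf2
  calc (p ^ 2 - m ^ 2) * (‖b‖ ^ 2 - ‖a‖ ^ 2)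
      ≤ (p ^ 2 - m ^ 2) * (‖b‖ ^ 2 - ‖a‖ ^ 2 * ‖f‖ ^ 2) := by gcongr
    _ = ‖a * m * f + b * p‖ ^ 2 - ‖a * p * f + b * m‖ ^ 2 :=
        (sq_norm_sub_sq_norm_hyperbolic a b f p m).symm
    _ ≤ ‖a * m * f + b * p‖ ^ 2 - ‖a * p * f * g + b * m * g‖ ^ 2 := by
        rw [← add_mul]; linarith

theorem alpha_recursion_lower_bound
    (γp γm : ℕ → ℝ) (e : ℕ → ℂ) (α21 α22 : ℕ → ℂ)
    (hγ : ∀ ℓ, 1 ≤ ℓ → |γm ℓ| < |γp ℓ|)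
    (he : ∀ ℓ, ‖e ℓ‖ ≤ 1)
    (h21₁ : α21 1 = e 1 * (γm 1 : ℂ))
    (h22₁ : α22 1 = (γp 1 : ℂ))
    (h21 : ∀ ℓ, 2 ≤ ℓ →
      α21 ℓ = α21 (ℓ - 1) * (γp ℓ : ℂ) * e (ℓ - 1) * e ℓ + α22 (ℓ - 1) * (γm ℓ : ℂ) * e ℓ)
    (h22 : ∀ ℓ, 2 ≤ ℓ →
      α22 ℓ = α21 (ℓ - 1) * (γm ℓ : ℂ) * e (ℓ - 1) + α22 (ℓ - 1) * (γp ℓ : ℂ)) :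
    ∀ ℓ, 1 ≤ ℓ →
      (∏ j ∈ Finset.Icc 1 ℓ, (|γp j| ^ 2 - |γm j| ^ 2))
          ≤ ‖α22 ℓ‖ ^ 2 - ‖α21 ℓ‖ ^ 2 ∧
      0 < ∏ j ∈ Finset.Icc 1 ℓ, (|γp j| ^ 2 - |γm j| ^ 2) := by
  intro ℓ hℓ
  have hsq : ∀ j, 1 ≤ j → γm j ^ 2 < γp j ^ 2 := fun j hj => sq_lt_sq.mpr (hγ j hj)
  simp only [sq_abs]
  refine ⟨?_, Finset.prod_pos fun j hj => sub_pos.mpr (hsq j (Finset.mem_Icc.mp hj).1)⟩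
  induction ℓ, hℓ using Nat.le_induction with
  | base =>
    simpa [h21₁, h22₁, mul_comm] using
      mul_sq_norm_sub_sq_norm_le_step 0 1 (e 0) (e 1) (he 0) (he 1) (hsq 1 le_rfl).le
  | succ n hn ih =>
    rw [Finset.prod_Icc_succ_top (by omega), h21 (n + 1) (by omega), h22 (n + 1) (by omega),
      Nat.add_sub_cancel, mul_comm]
    exact (mul_le_mul_of_nonneg_left ih (sub_nonneg.mpr (hsq _ (by omega)).le)).trans
      (mul_sq_norm_sub_sq_norm_le_step _ _ _ _ (he n) (he (n + 1)) (hsq _ (by omega)).le)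
end

section
/- Let a, b ≥ 0 and r > 0 with a + b < r, and let p ∈ ℕ. Then the rectangular truncation tail satisfies Σ_{n=0}^{p} Σ_{ν=p+1}^{∞} (aⁿ bᵛ (n+ν)!)/(r^{n+ν+1} n! ν!) + Σ_{n=p+1}^{∞} Σ_{ν=0}^{∞} (aⁿ bᵛ (n+ν)!)/(r^{n+ν+1} n! ν!) ≤ (2/(r - a - b)) ((a+b)/r)^{p+1}. -/
/-!
With `x = a / r` and `y = b / r`, the `(n, ν)` summand is `C(n + ν, n) xⁿ yᵛ / r`. The two pieces
range over disjoint parts of the region `n + ν ≥ p + 1`, and along each antidiagonal `n + ν = m`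
these terms add up to `(x + y)ᵐ` by the binomial theorem. All terms being nonnegative, the whole
region sums to `(x + y)^(p+1) / (1 - x - y)`, which after division by `r` is
`((a + b) / r)^(p+1) / (r - a - b)`: half the stated bound.
-/

open Finset Function

def binomialTerm {R : Type*} [CommSemiring R] (x y : R) (q : ℕ × ℕ) : R :=
  x ^ q.1 * y ^ q.2 * (q.1 + q.2).choose q.1

lemma sum_antidiagonal_binomialTerm {R : Type*} [CommSemiring R] (x y : R) (n : ℕ) :
    ∑ q ∈ antidiagonal n, binomialTerm x y q = (x + y) ^ n := by
  rw [(Commute.all x y).add_pow' n]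
  refine sum_congr rfl fun q hq => ?_
  rw [binomialTerm, HasAntidiagonal.mem_antidiagonal.1 hq, nsmul_eq_mul, mul_comm]

lemma binomialTerm_nonneg {x y : ℝ} (hx : 0 ≤ x) (hy : 0 ≤ y) (q : ℕ × ℕ) :
    0 ≤ binomialTerm x y q := by
  unfold binomialTerm
  positivity

lemma factorial_div_eq_binomialTerm_div {r : ℝ} (hr : r ≠ 0) (a b : ℝ) (n ν : ℕ) :
    a ^ n * b ^ ν * (n + ν).factorial / (r ^ (n + ν + 1) * n.factorial * ν.factorial) =
      binomialTerm (a / r) (b / r) (n, ν) / r := by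
  rw [binomialTerm, ← Nat.add_choose_mul_factorial_mul_factorial, Nat.choose_symm_add]
  push_cast
  rw [div_pow, div_pow]
  field_simp
  ring

lemma hasSum_of_sum_antidiagonal_of_nonneg {A : Type*} [AddCommMonoid A] [HasAntidiagonal A]
    {F : A × A → ℝ} (hF : 0 ≤ F) {s : ℝ}
    (h : HasSum (fun n => ∑ q ∈ antidiagonal n, F q) s) : HasSum F s := by
  rw [← HasAntidiagonal.sigmaAntidiagonalEquivProd.hasSum_iff]
  have hfiber (n : A) : HasSum (fun q : antidiagonal n => F q) (∑ q ∈ antidiagonal n, F q) :=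
    (antidiagonal n).hasSum F
  refine h.sigma_of_hasSum hfiber ((summable_sigma_of_nonneg fun _ => hF _).mpr
    ⟨fun n => (hfiber n).summable, ?_⟩)
  exact h.summable.congr fun n => (hfiber n).tsum_eq.symm

lemma hasSum_tail_binomialTerm {x y : ℝ} (hx : 0 ≤ x) (hy : 0 ≤ y) (hxy : x + y < 1) (k : ℕ) :
    HasSum ({q : ℕ × ℕ | k ≤ q.1 + q.2}.indicator (binomialTerm x y))
      ((x + y) ^ k / (1 - (x + y))) := by
  refine hasSum_of_sum_antidiagonal_of_nonneg
    (Set.indicator_nonneg fun q _ => binomialTerm_nonneg hx hy q) ?_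
  have hfiber (n : ℕ) : ∑ q ∈ antidiagonal n, {q : ℕ × ℕ | k ≤ q.1 + q.2}.indicator
      (binomialTerm x y) q = (Set.Ici k).indicator (fun m => (x + y) ^ m) n := by
    by_cases hn : k ≤ n
    · rw [Set.indicator_of_mem (show n ∈ Set.Ici k from hn), ← sum_antidiagonal_binomialTerm]
      refine sum_congr rfl fun q hq => Set.indicator_of_mem ?_ _
      rwa [← HasAntidiagonal.mem_antidiagonal.1 hq] at hn
    · rw [Set.indicator_of_notMem (show n ∉ Set.Ici k from hn)]
      refine sum_eq_zero fun q hq => Set.indicator_of_notMem ?_ _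
      rwa [← HasAntidiagonal.mem_antidiagonal.1 hq] at hn
  simp_rw [hfiber]
  rw [← hasSum_nat_add_iff' k, sum_eq_zero fun i hi =>
    Set.indicator_of_notMem (by simpa using mem_range.1 hi) _, sub_zero]
  simp only [Set.mem_Ici, le_add_self, Set.indicator_of_mem, pow_add]
  rw [div_eq_inv_mul]
  exact (hasSum_geometric_of_lt_one (add_nonneg hx hy) hxy).mul_right _

lemma rectangular_tail_le_of_hasSum {F : ℕ × ℕ → ℝ} (hF : 0 ≤ F) {p : ℕ} {s : ℝ}
    (hs : HasSum ({q : ℕ × ℕ | p + 1 ≤ q.1 + q.2}.indicator F) s) :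
    ∑ n ∈ range (p + 1), ∑' ν, F (n, ν + p + 1) + ∑' n, ∑' ν, F (n + p + 1, ν) ≤ s := by
  set G := {q : ℕ × ℕ | p + 1 ≤ q.1 + q.2}.indicator F
  let ι : (Fin (p + 1) × ℕ) ⊕ (ℕ × ℕ) → ℕ × ℕ :=
    Sum.elim (fun q => (q.1, q.2 + p + 1)) (fun q => (q.1 + p + 1, q.2))
  have hι : Injective ι := by
    refine Injective.sumElim ?_ ?_ ?_ <;> rintro ⟨n, ν⟩ ⟨n', ν'⟩ h <;>
      simp only [Prod.mk.injEq] at h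
    · exact Prod.ext (Fin.ext h.1) (by omega)
    · exact Prod.ext (by omega) h.2
    · omega
  have hιG (i) : G (ι i) = F (ι i) :=
    Set.indicator_of_mem (by rcases i with ⟨⟨n, hn⟩, ν⟩ | ⟨n, ν⟩ <;> simp [ι] <;> omega) _
  have hsum : Summable fun i => F (ι i) := (hs.summable.comp_injective hι).congr hιG
  have hinl : Summable fun q : Fin (p + 1) × ℕ => F (q.1, q.2 + p + 1) :=
    (hsum.comp_injective Sum.inl_injective :)
  have hinr : Summable fun q : ℕ × ℕ => F (q.1 + p + 1, q.2) :=
    (hsum.comp_injective Sum.inr_injective :)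
  have hfinite : ∑' q : Fin (p + 1) × ℕ, F (q.1, q.2 + p + 1) =
      ∑ n ∈ range (p + 1), ∑' ν, F (n, ν + p + 1) := by
    rw [hinl.tsum_prod, tsum_fintype, Fin.sum_univ_eq_sum_range (fun n => ∑' ν, F (n, ν + p + 1))]
  calc _ = ∑' i, F (ι i) := by
        rw [Summable.tsum_sum (f := fun i => F (ι i)) hinl hinr]
        exact congrArg₂ (· + ·) hfinite.symm hinr.tsum_prod.symm
    _ = ∑' i, G (ι i) := tsum_congr fun i => (hιG i).symm
    _ ≤ ∑' q, G q := tsum_comp_le_tsum_of_inj hs.summable (Set.indicator_nonneg fun q _ => hF q) hι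
    _ = s := hs.tsum_eq

theorem double_series_rectangular_tail (a b r : ℝ) (ha : 0 ≤ a) (hb : 0 ≤ b) (hr : 0 < r)
    (hab : a + b < r) (p : ℕ) :
    (∑ n ∈ Finset.range (p + 1), ∑' ν : ℕ,
        a ^ n * b ^ (ν + p + 1) * (Nat.factorial (n + (ν + p + 1))) /
          (r ^ (n + (ν + p + 1) + 1) * (Nat.factorial n) * (Nat.factorial (ν + p + 1))))
      + (∑' n : ℕ, ∑' ν : ℕ,
        a ^ (n + p + 1) * b ^ ν * (Nat.factorial ((n + p + 1) + ν)) /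
          (r ^ ((n + p + 1) + ν + 1) * (Nat.factorial (n + p + 1)) * (Nat.factorial ν)))
      ≤ (2 / (r - a - b)) * ((a + b) / r) ^ (p + 1) := by
  have hx : 0 ≤ a / r := by positivity
  have hy : 0 ≤ b / r := by positivity
  have hxy : a / r + b / r < 1 := by rwa [← add_div, div_lt_one hr]
  have hrab : 0 < r - a - b := by linarith
  simp only [factorial_div_eq_binomialTerm_div hr.ne', tsum_div_const, ← sum_div, ← add_div]
  calc _ ≤ (a / r + b / r) ^ (p + 1) / (1 - (a / r + b / r)) / r := by
        gcongr
        exact rectangular_tail_le_of_hasSum (binomialTerm_nonneg hx hy)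
          (hasSum_tail_binomialTerm hx hy hxy (p + 1))
    _ = 1 / (r - a - b) * ((a + b) / r) ^ (p + 1) := by
        rw [← add_div, one_sub_div hr.ne', ← sub_sub]
        field_simp
    _ ≤ 2 / (r - a - b) * ((a + b) / r) ^ (p + 1) := by gcongr; norm_num
end

section
/- With the Cagniard–de Hoop contour ξ±(t) = (η/r)(iρt ± z√(t²-1)), Λ±(t) = (η/r)(ρ√(t²-1) ∓ izt) for ρ ≥ 0, z > 0, r = √(ρ²+z²), η > 0, t > 1, one has |ξ±(t) + iη|² = |Λ±(t)|² (rt + ρ)/(rt - ρ) and |ξ±(t) - iη|² = |Λ±(t)|² (rt - ρ)/(rt + ρ). -/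
/-!
Put `k = η / r` and `s = √(t² - 1)`, so that `η = k r`. Then
`ξ± ± iη = k (±z s + i (ρ t ± r))` and `Λ± = k (ρ s ∓ i z t)`, and the relations
`r² = ρ² + z²`, `s² = t² - 1` turn the squared moduli into perfect products:
`(z s)² + (ρ t ± r)² = (r t ± ρ)²` and `(ρ s)² + (z t)² = (r t - ρ)(r t + ρ)`.
Both identities are then quotients of these, legitimate because `r t ≥ r > |ρ|`.
-/

open Complex

section CagniardDeHoop

variable {ρ z r t s : ℝ}

theorem sq_add_sq_add_eq_sq (hr : r ^ 2 = ρ ^ 2 + z ^ 2) (hs : s ^ 2 = t ^ 2 - 1) :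
    (z * s) ^ 2 + (ρ * t + r) ^ 2 = (r * t + ρ) ^ 2 := by
  linear_combination z ^ 2 * hs + (1 - t ^ 2) * hr

theorem sq_add_sq_sub_eq_sq (hr : r ^ 2 = ρ ^ 2 + z ^ 2) (hs : s ^ 2 = t ^ 2 - 1) :
    (z * s) ^ 2 + (ρ * t - r) ^ 2 = (r * t - ρ) ^ 2 := by
  linear_combination z ^ 2 * hs + (1 - t ^ 2) * hr

theorem sq_add_sq_eq_mul (hr : r ^ 2 = ρ ^ 2 + z ^ 2) (hs : s ^ 2 = t ^ 2 - 1) :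
    (ρ * s) ^ 2 + (z * t) ^ 2 = (r * t - ρ) * (r * t + ρ) := by
  linear_combination ρ ^ 2 * hs - t ^ 2 * hr

theorem abs_lt_mul_of_sq_eq_sq_add_sq (hr0 : 0 ≤ r) (hr : r ^ 2 = ρ ^ 2 + z ^ 2) (hz : z ≠ 0)
    (ht : 1 ≤ t) : |ρ| < r * t :=
  (abs_lt_of_sq_lt_sq (hr ▸ lt_add_of_pos_right _ (by positivity)) hr0).trans_le
    (le_mul_of_one_le_right hr0 ht)

end CagniardDeHoop

theorem sq_norm_ofReal_mul_add_I_mul (k x y : ℝ) :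
    ‖(k : ℂ) * (x + I * y)‖ ^ 2 = k ^ 2 * (x ^ 2 + y ^ 2) := by
  rw [norm_mul, mul_pow, norm_real, Real.norm_eq_abs, sq_abs, Complex.sq_norm, mul_comm I,
    normSq_add_mul_I]

open Complex in
theorem cagniard_de_hoop_modulus_identities_general (ρ z η r t : ℝ)
    (hz : 0 < z) (hr : r = Real.sqrt (ρ ^ 2 + z ^ 2)) (ht : 1 < t) :
    (‖(((η / r : ℝ) : ℂ) * (I * ρ * t + z * Real.sqrt (t ^ 2 - 1))) + I * η‖ ^ 2
        = ‖(((η / r : ℝ) : ℂ) * (ρ * Real.sqrt (t ^ 2 - 1) - I * z * t))‖ ^ 2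
            * ((r * t + ρ) / (r * t - ρ))) ∧
    (‖(((η / r : ℝ) : ℂ) * (I * ρ * t + z * Real.sqrt (t ^ 2 - 1))) - I * η‖ ^ 2
        = ‖(((η / r : ℝ) : ℂ) * (ρ * Real.sqrt (t ^ 2 - 1) - I * z * t))‖ ^ 2
            * ((r * t - ρ) / (r * t + ρ))) ∧
    (‖(((η / r : ℝ) : ℂ) * (I * ρ * t - z * Real.sqrt (t ^ 2 - 1))) + I * η‖ ^ 2
        = ‖(((η / r : ℝ) : ℂ) * (ρ * Real.sqrt (t ^ 2 - 1) + I * z * t))‖ ^ 2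
            * ((r * t + ρ) / (r * t - ρ))) ∧
    (‖(((η / r : ℝ) : ℂ) * (I * ρ * t - z * Real.sqrt (t ^ 2 - 1))) - I * η‖ ^ 2
        = ‖(((η / r : ℝ) : ℂ) * (ρ * Real.sqrt (t ^ 2 - 1) + I * z * t))‖ ^ 2
            * ((r * t - ρ) / (r * t + ρ))) := by
  have hr2 : r ^ 2 = ρ ^ 2 + z ^ 2 := by rw [hr, Real.sq_sqrt (by positivity)]
  have hr0 : 0 < r := hr ▸ Real.sqrt_pos.mpr (by positivity)
  obtain ⟨hρ₁, hρ₂⟩ := abs_lt.mp (abs_lt_mul_of_sq_eq_sq_add_sq hr0.le hr2 hz.ne' ht.le)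
  have hminus : r * t - ρ ≠ 0 := by linarith
  have hplus : r * t + ρ ≠ 0 := by linarith
  set s := Real.sqrt (t ^ 2 - 1)
  have hs : s ^ 2 = t ^ 2 - 1 := Real.sq_sqrt (by nlinarith)
  set k := η / r
  have hk : η = k * r := (div_mul_cancel₀ η hr0.ne').symm
  have hξ₁ : (k : ℂ) * (I * ρ * t + z * s) + I * η =
      k * ((z * s : ℝ) + I * (ρ * t + r : ℝ)) := by
    rw [hk]; push_cast; ring
  have hξ₂ : (k : ℂ) * (I * ρ * t + z * s) - I * η =
      k * ((z * s : ℝ) + I * (ρ * t - r : ℝ)) := by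
    rw [hk]; push_cast; ring
  have hξ₃ : (k : ℂ) * (I * ρ * t - z * s) + I * η =
      k * ((-(z * s) : ℝ) + I * (ρ * t + r : ℝ)) := by
    rw [hk]; push_cast; ring
  have hξ₄ : (k : ℂ) * (I * ρ * t - z * s) - I * η =
      k * ((-(z * s) : ℝ) + I * (ρ * t - r : ℝ)) := by
    rw [hk]; push_cast; ring
  have hΛ₁ : (k : ℂ) * (ρ * s - I * z * t) = k * ((ρ * s : ℝ) + I * (-(z * t) : ℝ)) := by
    push_cast; ring
  have hΛ₂ : (k : ℂ) * (ρ * s + I * z * t) = k * ((ρ * s : ℝ) + I * (z * t : ℝ)) := by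
    push_cast; ring
  simp only [hξ₁, hξ₂, hξ₃, hξ₄, hΛ₁, hΛ₂, sq_norm_ofReal_mul_add_I_mul, neg_sq,
    sq_add_sq_add_eq_sq hr2 hs, sq_add_sq_sub_eq_sq hr2 hs, sq_add_sq_eq_mul hr2 hs]
  refine ⟨?_, ?_, ?_, ?_⟩ <;> field_simp

open Complex in
theorem cagniard_de_hoop_modulus_identities (ρ z η r t : ℝ)
    (hρ : 0 ≤ ρ) (hz : 0 < z) (hr : r = Real.sqrt (ρ ^ 2 + z ^ 2)) (hη : 0 < η) (ht : 1 < t) :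
    (‖(((η / r : ℝ) : ℂ) * (I * ρ * t + z * Real.sqrt (t ^ 2 - 1))) + I * η‖ ^ 2
        = ‖(((η / r : ℝ) : ℂ) * (ρ * Real.sqrt (t ^ 2 - 1) - I * z * t))‖ ^ 2
            * ((r * t + ρ) / (r * t - ρ))) ∧
    (‖(((η / r : ℝ) : ℂ) * (I * ρ * t + z * Real.sqrt (t ^ 2 - 1))) - I * η‖ ^ 2
        = ‖(((η / r : ℝ) : ℂ) * (ρ * Real.sqrt (t ^ 2 - 1) - I * z * t))‖ ^ 2
            * ((r * t - ρ) / (r * t + ρ))) ∧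
    (‖(((η / r : ℝ) : ℂ) * (I * ρ * t - z * Real.sqrt (t ^ 2 - 1))) + I * η‖ ^ 2
        = ‖(((η / r : ℝ) : ℂ) * (ρ * Real.sqrt (t ^ 2 - 1) + I * z * t))‖ ^ 2
            * ((r * t + ρ) / (r * t - ρ))) ∧
    (‖(((η / r : ℝ) : ℂ) * (I * ρ * t - z * Real.sqrt (t ^ 2 - 1))) - I * η‖ ^ 2
        = ‖(((η / r : ℝ) : ℂ) * (ρ * Real.sqrt (t ^ 2 - 1) + I * z * t))‖ ^ 2
            * ((r * t - ρ) / (r * t + ρ))) :=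
  cagniard_de_hoop_modulus_identities_general ρ z η r t hz hr ht
end

section
/- Let r > ρ ≥ 0, α, ψ ∈ ℝ, and t > 1. Then |rt cos(ψ) sin α + i(ρ sin(ψ) sin α + √(r²t² - ρ²) cos α)|² ≤ r²t², i.e., (ρ sin α + √(r²t²-ρ²) sin ψ cos α)² + (r²t² - ρ²) cos²ψ ≤ r²t². -/
/-! Write `s = √(r²t² - ρ²)`, so that `ρ² + s² = r²t²` because `ρ < r < rt`. Both claims then follow
from the two-dimensional Cauchy–Schwarz inequality: `ρ sin ψ sin α + s cos α` is the inner product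
of `(ρ, s)` with `(sin ψ sin α, cos α)`, whose squared length is `1 - cos² ψ sin² α`, and
`ρ sin α + s sin ψ cos α` is the inner product of `(ρ, s sin ψ)` with the unit vector `(sin α, cos α)`. -/

theorem sq_mul_add_mul_le (a b x y : ℝ) :
    (a * x + b * y) ^ 2 ≤ (a ^ 2 + b ^ 2) * (x ^ 2 + y ^ 2) := by
  nlinarith [sq_nonneg (a * y - b * x)]

theorem Complex.sq_norm_ofReal_add_I_mul (x y : ℝ) :
    ‖(x : ℂ) + Complex.I * y‖ ^ 2 = x ^ 2 + y ^ 2 := by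
  rw [Complex.sq_norm, mul_comm, Complex.normSq_add_mul_I]

theorem sq_add_sq_sqrt_sub_sq {a R : ℝ} (h : a ^ 2 ≤ R) : a ^ 2 + Real.sqrt (R - a ^ 2) ^ 2 = R := by
  rw [Real.sq_sqrt (sub_nonneg.mpr h)]
  ring

open Complex in
theorem kernel_modulus_bound (r ρ α ψ t : ℝ) (hρ : 0 ≤ ρ) (hr : ρ < r) (ht : 1 < t) :
    ‖((r * t * Real.cos ψ * Real.sin α : ℝ)
          + Complex.I * ((ρ * Real.sin ψ * Real.sin α
              + Real.sqrt (r ^ 2 * t ^ 2 - ρ ^ 2) * Real.cos α : ℝ)))‖ ^ 2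
        ≤ r ^ 2 * t ^ 2 ∧
    (ρ * Real.sin α + Real.sqrt (r ^ 2 * t ^ 2 - ρ ^ 2) * Real.sin ψ * Real.cos α) ^ 2
        + (r ^ 2 * t ^ 2 - ρ ^ 2) * Real.cos ψ ^ 2 ≤ r ^ 2 * t ^ 2 := by
  have hρr : ρ ^ 2 ≤ r ^ 2 * t ^ 2 :=
    calc ρ ^ 2 ≤ r ^ 2 * 1 := by rw [mul_one]; gcongr
      _ ≤ r ^ 2 * t ^ 2 := by gcongr; exact one_le_pow₀ ht.le
  set s := Real.sqrt (r ^ 2 * t ^ 2 - ρ ^ 2)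
  have hs : ρ ^ 2 + s ^ 2 = r ^ 2 * t ^ 2 := sq_add_sq_sqrt_sub_sq hρr
  have hα := Real.sin_sq_add_cos_sq α
  have hψ := Real.sin_sq_add_cos_sq ψ
  constructor
  · rw [Complex.sq_norm_ofReal_add_I_mul, mul_assoc ρ]
    calc (r * t * Real.cos ψ * Real.sin α) ^ 2 + (ρ * (Real.sin ψ * Real.sin α) + s * Real.cos α) ^ 2
        ≤ (r * t * Real.cos ψ * Real.sin α) ^ 2
            + (ρ ^ 2 + s ^ 2) * ((Real.sin ψ * Real.sin α) ^ 2 + Real.cos α ^ 2) := by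
          gcongr; exact sq_mul_add_mul_le _ _ _ _
      _ = r ^ 2 * t ^ 2 := by
          rw [hs]; linear_combination r ^ 2 * t ^ 2 * (Real.sin α ^ 2 * hψ + hα)
  · calc (ρ * Real.sin α + s * Real.sin ψ * Real.cos α) ^ 2 + (r ^ 2 * t ^ 2 - ρ ^ 2) * Real.cos ψ ^ 2
        ≤ (ρ ^ 2 + (s * Real.sin ψ) ^ 2) * (Real.sin α ^ 2 + Real.cos α ^ 2)
            + s ^ 2 * Real.cos ψ ^ 2 := by
          rw [← hs, add_sub_cancel_left]; gcongr; exact sq_mul_add_mul_le _ _ _ _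
      _ = r ^ 2 * t ^ 2 := by
          rw [← hs]; linear_combination (ρ ^ 2 + s ^ 2 * Real.sin ψ ^ 2) * hα + s ^ 2 * hψ
end

section
/- Let r > ρ ≥ 0, z > 0 with r² = ρ² + z², η > 0, and define ξ±(t), Λ±(t) as the Cagniard–de Hoop contour. For any point r̃ = (r̃ sin α cos β, r̃ sin α sin β, r̃ cos α) ∈ ℝ³ with r̃ = |r̃|, any φ ∈ ℝ, and any integer q ≥ 0, the function ĝ_q(ξ,η,φ;r̃) = (i^q r̃^q/q!)(ξ²+η²)^{q/2}[((ξ cos(φ-β)+η sin(φ-β))/√(ξ²+η²)) sin α + i cos α]^q satisfies |ĝ_q(ξ±(t), η, φ; r̃)| ≤ (r̃^q |Λ±(t)|^q / q!) (r²t²/(r²t² - ρ²))^{q/2} for all t > 1. -/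
/-- The sign convention: `1` for `x ≥ 0`, `-1` for `x < 0`. -/
noncomputable def signConv (x : ℝ) : ℝ := if x < 0 then -1 else 1

/-- The branch of the complex square root defined by
`√z = √((|z|+Re z)/2) + i·sign(Im z)·√((|z|-Re z)/2)`. -/
noncomputable def branchSqrt (z : ℂ) : ℂ :=
  (Real.sqrt ((‖z‖ + z.re) / 2) : ℂ)
    + Complex.I * (signConv z.im : ℂ) * (Real.sqrt ((‖z‖ - z.re) / 2) : ℂ)

/-- The kernel `ĝ_q(ξ, η, φ; r̃)` for a point with spherical coordinates `(r̃, α, β)`,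
where `(ξ² + η²)^{q/2}` is interpreted via the branch `branchSqrt`. -/
noncomputable def ghat (q : ℕ) (ξ : ℂ) (η φ α β rt : ℝ) : ℂ :=
  (Complex.I ^ q * (rt : ℂ) ^ q / (Nat.factorial q : ℂ))
    * (branchSqrt (ξ ^ 2 + (η : ℂ) ^ 2)) ^ q
    * (((ξ * (Real.cos (φ - β) : ℝ) + (η : ℂ) * (Real.sin (φ - β) : ℝ))
          / branchSqrt (ξ ^ 2 + (η : ℂ) ^ 2)) * (Real.sin α : ℝ)
        + Complex.I * (Real.cos α : ℝ)) ^ q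

/-!
With `r = √(ρ² + z²)`, `s = ±√(t² - 1)` and `A = (η/r)(zt + iρs)` one has `ξ² + η² = A²` on the
contour, and `Re A > 0`, so the chosen branch gives `√(ξ² + η²) = A`. Then
`ĝ_q = (i r̃)^q / q! · (∑ Vᵢ nᵢ)^q` with `V = (ξ, η, iA)` and the unit vector
`n = (cos(φ-β) sin α, sin(φ-β) sin α, cos α)`. Since `V` is isotropic (`∑ Vᵢ² = 0`), its real and
imaginary parts are orthogonal of equal length, whence `|∑ Vᵢ nᵢ|² ≤ ‖V‖²/2 = η²t²`. Finally
`|Λ±| · √(r²t² / (r²t² - ρ²)) = ηt` exactly.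
-/

open Complex

theorem inner_sq_add_inner_sq_le {E : Type*} [NormedAddCommGroup E] [InnerProductSpace ℝ E]
    {u v : E} (huv : inner ℝ u v = 0) (hnorm : ‖u‖ = ‖v‖) (n : E) :
    inner ℝ u n ^ 2 + inner ℝ v n ^ 2 ≤ ‖u‖ ^ 2 * ‖n‖ ^ 2 := by
  set a := inner ℝ u n
  set b := inner ℝ v n
  have hw : inner ℝ (a • u + b • v) n = a ^ 2 + b ^ 2 := by
    simp only [inner_add_left, real_inner_smul_left]; ring
  have hw_norm : ‖a • u + b • v‖ ^ 2 = (a ^ 2 + b ^ 2) * ‖u‖ ^ 2 := by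
    rw [← real_inner_self_eq_norm_sq]
    simp only [inner_add_left, inner_add_right, real_inner_smul_left, real_inner_smul_right,
      real_inner_self_eq_norm_sq, real_inner_comm u v, huv, hnorm, norm_smul, mul_pow,
      Real.norm_eq_abs, sq_abs]
    ring
  have hcs := real_inner_mul_inner_self_le (a • u + b • v) n
  rw [hw, real_inner_self_eq_norm_sq, real_inner_self_eq_norm_sq, hw_norm] at hcs
  rcases (add_nonneg (sq_nonneg a) (sq_nonneg b)).eq_or_lt with h | h
  · rw [← h]; positivity
  · nlinarith

theorem norm_sum_mul_sq_le_of_sum_sq_eq_zero {ι : Type*} [Fintype ι] {V : ι → ℂ}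
    (hV : ∑ i, V i ^ 2 = 0) (n : ι → ℝ) :
    ‖∑ i, V i * n i‖ ^ 2 ≤ (∑ i, ‖V i‖ ^ 2) / 2 * ∑ i, n i ^ 2 := by
  have hre : ∑ i, (V i).re ^ 2 = ∑ i, (V i).im ^ 2 := by
    rw [← sub_eq_zero, ← Finset.sum_sub_distrib]
    simpa [sq] using congrArg Complex.re hV
  have him : ∑ i, (V i).re * (V i).im = 0 := by
    have := congrArg Complex.im hV
    simp only [im_sum, sq, mul_im, zero_im] at this
    simp_rw [mul_comm (V _).im, ← two_mul, ← Finset.mul_sum] at this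
    simpa using this
  let u : EuclideanSpace ℝ ι := WithLp.toLp 2 fun i ↦ (V i).re
  let v : EuclideanSpace ℝ ι := WithLp.toLp 2 fun i ↦ (V i).im
  have hu : ‖u‖ ^ 2 = (∑ i, ‖V i‖ ^ 2) / 2 := by
    simp only [u, EuclideanSpace.norm_sq_eq, Real.norm_eq_abs, sq_abs, Complex.sq_norm,
      Complex.normSq_apply, ← sq, Finset.sum_add_distrib, ← hre]
    ring
  have hv : ‖v‖ = ‖u‖ := by
    simp only [u, v, EuclideanSpace.norm_eq, Real.norm_eq_abs, sq_abs, hre]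
  have huv : inner ℝ u v = 0 := by
    simpa [u, v, PiLp.inner_apply, mul_comm] using him
  let n' : EuclideanSpace ℝ ι := WithLp.toLp 2 n
  have hsum : ‖∑ i, V i * n i‖ ^ 2 = inner ℝ u n' ^ 2 + inner ℝ v n' ^ 2 := by
    rw [Complex.sq_norm, Complex.normSq_apply]
    simp [u, v, n', PiLp.inner_apply, re_sum, im_sum, sq, mul_comm]
  have hn : ‖n'‖ ^ 2 = ∑ i, n i ^ 2 := by
    simp [n', EuclideanSpace.norm_sq_eq]
  rw [hsum, ← hu, ← hn]
  exact inner_sq_add_inner_sq_le huv hv.symm _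

theorem branchSqrt_sq {c : ℂ} (hc : 0 < c.re) : branchSqrt (c ^ 2) = c := by
  have hnorm : ‖c ^ 2‖ = c.re ^ 2 + c.im ^ 2 := by
    rw [norm_pow, Complex.sq_norm, normSq_apply]; ring
  have hre : (c ^ 2).re = c.re ^ 2 - c.im ^ 2 := by simp [sq]
  have him : (c ^ 2).im = 2 * c.re * c.im := by simp only [sq, mul_im]; ring
  have hplus : (c.re ^ 2 + c.im ^ 2 + (c.re ^ 2 - c.im ^ 2)) / 2 = c.re ^ 2 := by ring
  have hminus : (c.re ^ 2 + c.im ^ 2 - (c.re ^ 2 - c.im ^ 2)) / 2 = c.im ^ 2 := by ring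
  unfold branchSqrt signConv
  rw [hnorm, hre, him, hplus, hminus, Real.sqrt_sq hc.le, Real.sqrt_sq_eq_abs]
  rcases lt_or_ge c.im 0 with hneg | hnonneg
  · rw [if_pos (by nlinarith), abs_of_neg hneg]
    apply Complex.ext <;> simp
  · rw [if_neg (by nlinarith), abs_of_nonneg hnonneg]
    apply Complex.ext <;> simp

theorem norm_ghat_eq {ξ A : ℂ} {η : ℝ} (hA : branchSqrt (ξ ^ 2 + (η : ℂ) ^ 2) = A) (hA0 : A ≠ 0)
    (q : ℕ) (φ α β rt : ℝ) :
    ‖ghat q ξ η φ α β rt‖ = |rt| ^ q / q.factorial *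
      ‖ξ * ↑(Real.cos (φ - β) * Real.sin α) + η * ↑(Real.sin (φ - β) * Real.sin α)
        + I * A * Real.cos α‖ ^ q := by
  have hpow : ∀ (X : ℂ) (a b : ℝ), A ^ q * (X / A * a + I * b) ^ q = (X * a + I * A * b) ^ q := by
    intro X a b
    rw [← mul_pow]
    field_simp
  rw [ghat, hA, mul_assoc, hpow, norm_mul, norm_div, norm_mul, norm_pow, norm_pow, norm_pow,
    norm_I, one_pow, one_mul, norm_real, Real.norm_eq_abs, Complex.norm_natCast]
  push_cast
  ring_nf

section Contour

variable {ρ z η r t s : ℝ}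

theorem contour_sq_add_sq (hr : 0 < r) (hr2 : r ^ 2 = ρ ^ 2 + z ^ 2) (hs : s ^ 2 = t ^ 2 - 1) :
    (((η / r : ℝ) : ℂ) * (I * ρ * t + z * s)) ^ 2 + (η : ℂ) ^ 2
      = (((η / r : ℝ) : ℂ) * (z * t + I * ρ * s)) ^ 2 := by
  have hr2' : (r : ℂ) ^ 2 = ρ ^ 2 + z ^ 2 := by exact_mod_cast hr2
  have hs' : (s : ℂ) ^ 2 = t ^ 2 - 1 := by exact_mod_cast hs
  have hr' : (r : ℂ) ≠ 0 := by exact_mod_cast hr.ne'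
  push_cast
  field_simp
  linear_combination (η : ℂ) ^ 2 * (hr2' + (ρ ^ 2 + z ^ 2) * hs'
    + (ρ : ℂ) ^ 2 * (t ^ 2 - s ^ 2) * I_sq)

theorem norm_ghat_contour_le (hz : 0 < z) (hη : 0 < η) (hr : 0 < r) (ht : 0 < t)
    (hr2 : r ^ 2 = ρ ^ 2 + z ^ 2) (hs : s ^ 2 = t ^ 2 - 1) (q : ℕ) (φ α β rt : ℝ) :
    ‖ghat q (((η / r : ℝ) : ℂ) * (I * ρ * t + z * s)) η φ α β rt‖
      ≤ |rt| ^ q / q.factorial * (η * t) ^ q := by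
  set ξ : ℂ := ((η / r : ℝ) : ℂ) * (I * ρ * t + z * s)
  set A : ℂ := ((η / r : ℝ) : ℂ) * (z * t + I * ρ * s)
  have hξ_re : ξ.re = η / r * (z * s) := by simp [ξ]
  have hξ_im : ξ.im = η / r * (ρ * t) := by simp [ξ]
  have hA_re : A.re = η / r * (z * t) := by simp [A]
  have hA_im : A.im = η / r * (ρ * s) := by simp [A]
  have hA_re_pos : 0 < A.re := by rw [hA_re]; positivity
  have hA : branchSqrt (ξ ^ 2 + (η : ℂ) ^ 2) = A := by
    rw [contour_sq_add_sq hr hr2 hs, branchSqrt_sq hA_re_pos]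
  rw [norm_ghat_eq hA (fun h ↦ by simp [h] at hA_re_pos)]
  gcongr
  have hiso := norm_sum_mul_sq_le_of_sum_sq_eq_zero (V := ![ξ, (η : ℂ), I * A])
    (by
      simp only [Fin.sum_univ_three, Matrix.cons_val_zero, Matrix.cons_val_one,
        Matrix.cons_val_two, Matrix.head_cons, Matrix.tail_cons]
      linear_combination contour_sq_add_sq hr hr2 hs + A ^ 2 * I_sq)
    ![Real.cos (φ - β) * Real.sin α, Real.sin (φ - β) * Real.sin α, Real.cos α]
  simp only [Fin.sum_univ_three, Matrix.cons_val_zero, Matrix.cons_val_one, Matrix.cons_val_two,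
    Matrix.head_cons, Matrix.tail_cons] at hiso
  have hV : ‖ξ‖ ^ 2 + ‖(η : ℂ)‖ ^ 2 + ‖I * A‖ ^ 2 = 2 * (η * t) ^ 2 := by
    rw [norm_mul I A, norm_I, one_mul, norm_real, Real.norm_eq_abs, sq_abs, Complex.sq_norm,
      Complex.sq_norm, normSq_apply, normSq_apply, hξ_re, hξ_im, hA_re, hA_im]
    field_simp
    linear_combination (-(s ^ 2 + t ^ 2)) * hr2 + r ^ 2 * hs
  have hn : (Real.cos (φ - β) * Real.sin α) ^ 2 + (Real.sin (φ - β) * Real.sin α) ^ 2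
      + Real.cos α ^ 2 = 1 := by
    linear_combination Real.sin α ^ 2 * Real.cos_sq_add_sin_sq (φ - β) + Real.sin_sq_add_cos_sq α
  rw [hV, hn] at hiso
  exact (sq_le_sq₀ (norm_nonneg _) (by positivity)).1 (by linarith)

theorem norm_contour_mul_sqrt (hz : 0 < z) (hη : 0 ≤ η) (hr : 0 < r) (ht : 0 < t)
    (hr2 : r ^ 2 = ρ ^ 2 + z ^ 2) (hs : s ^ 2 = t ^ 2 - 1) :
    ‖((η / r : ℝ) : ℂ) * (ρ * s - I * z * t)‖
        * √((ρ ^ 2 + z ^ 2) * t ^ 2 / ((ρ ^ 2 + z ^ 2) * t ^ 2 - ρ ^ 2))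
      = η * t := by
  have hnorm : ‖(ρ : ℂ) * s - I * z * t‖ = √((ρ ^ 2 + z ^ 2) * t ^ 2 - ρ ^ 2) := by
    rw [show (ρ : ℂ) * s - I * z * t = ↑(ρ * s) + ↑(-(z * t)) * I by push_cast; ring,
      norm_add_mul_I]
    congr 1
    linear_combination ρ ^ 2 * hs
  have hpos : 0 < (ρ ^ 2 + z ^ 2) * t ^ 2 - ρ ^ 2 := by nlinarith [sq_nonneg (ρ * s)]
  rw [norm_mul, norm_real, Real.norm_of_nonneg (by positivity), hnorm, mul_assoc,
    ← Real.sqrt_mul hpos.le, mul_div_cancel₀ _ hpos.ne', ← hr2, Real.sqrt_mul (by positivity),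
    Real.sqrt_sq hr.le, Real.sqrt_sq ht.le]
  field_simp

end Contour

theorem ghat_bound_on_contour_general (ρ z η rt α β φ : ℝ) (q : ℕ) (t : ℝ)
    (hz : 0 < z) (hη : 0 < η) (hrt : 0 ≤ rt) (ht : 1 < t) :
    (‖(ghat q
          (((η / Real.sqrt (ρ ^ 2 + z ^ 2) : ℝ) : ℂ)
            * (Complex.I * ρ * t + z * Real.sqrt (t ^ 2 - 1))) η φ α β rt)‖
        ≤ rt ^ q
            * ‖(((η / Real.sqrt (ρ ^ 2 + z ^ 2) : ℝ) : ℂ)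
                * (ρ * Real.sqrt (t ^ 2 - 1) - Complex.I * z * t))‖ ^ q
            / (Nat.factorial q)
            * Real.sqrt ((ρ ^ 2 + z ^ 2) * t ^ 2 / ((ρ ^ 2 + z ^ 2) * t ^ 2 - ρ ^ 2)) ^ q) ∧
    (‖(ghat q
          (((η / Real.sqrt (ρ ^ 2 + z ^ 2) : ℝ) : ℂ)
            * (Complex.I * ρ * t - z * Real.sqrt (t ^ 2 - 1))) η φ α β rt)‖
        ≤ rt ^ q
            * ‖(((η / Real.sqrt (ρ ^ 2 + z ^ 2) : ℝ) : ℂ)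
                * (ρ * Real.sqrt (t ^ 2 - 1) + Complex.I * z * t))‖ ^ q
            / (Nat.factorial q)
            * Real.sqrt ((ρ ^ 2 + z ^ 2) * t ^ 2 / ((ρ ^ 2 + z ^ 2) * t ^ 2 - ρ ^ 2)) ^ q) := by
  have hr : 0 < √(ρ ^ 2 + z ^ 2) := Real.sqrt_pos.2 (by positivity)
  have hr2 : √(ρ ^ 2 + z ^ 2) ^ 2 = ρ ^ 2 + z ^ 2 := Real.sq_sqrt (by positivity)
  have ht0 : 0 < t := one_pos.trans ht
  have hs : √(t ^ 2 - 1) ^ 2 = t ^ 2 - 1 := Real.sq_sqrt (by nlinarith)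
  have hs' : (-√(t ^ 2 - 1)) ^ 2 = t ^ 2 - 1 := by rw [neg_sq, hs]
  have bound : ∀ s : ℝ, s ^ 2 = t ^ 2 - 1 →
      ‖ghat q (((η / √(ρ ^ 2 + z ^ 2) : ℝ) : ℂ) * (I * ρ * t + z * s)) η φ α β rt‖
        ≤ rt ^ q * ‖((η / √(ρ ^ 2 + z ^ 2) : ℝ) : ℂ) * (ρ * s - I * z * t)‖ ^ q / q.factorial
          * √((ρ ^ 2 + z ^ 2) * t ^ 2 / ((ρ ^ 2 + z ^ 2) * t ^ 2 - ρ ^ 2)) ^ q := by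
    intro s hs
    calc _ ≤ |rt| ^ q / q.factorial * (η * t) ^ q :=
          norm_ghat_contour_le hz hη hr ht0 hr2 hs q φ α β rt
      _ = _ := by
          rw [abs_of_nonneg hrt, ← norm_contour_mul_sqrt hz hη.le hr ht0 hr2 hs]
          ring
  refine ⟨bound _ hs, ?_⟩
  -- the lower branch is the upper one with `s = -√(t² - 1)`
  convert bound _ hs' using 5
  · push_cast; ring
  · rw [← norm_neg]; push_cast; ring_nf

theorem ghat_bound_on_contour (ρ z η rt α β φ : ℝ) (q : ℕ) (t : ℝ)
    (hρ : 0 ≤ ρ) (hz : 0 < z) (hη : 0 < η) (hrt : 0 ≤ rt) (ht : 1 < t) :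
    (‖(ghat q
          (((η / Real.sqrt (ρ ^ 2 + z ^ 2) : ℝ) : ℂ)
            * (Complex.I * ρ * t + z * Real.sqrt (t ^ 2 - 1))) η φ α β rt)‖
        ≤ rt ^ q
            * ‖(((η / Real.sqrt (ρ ^ 2 + z ^ 2) : ℝ) : ℂ)
                * (ρ * Real.sqrt (t ^ 2 - 1) - Complex.I * z * t))‖ ^ q
            / (Nat.factorial q)
            * Real.sqrt ((ρ ^ 2 + z ^ 2) * t ^ 2 / ((ρ ^ 2 + z ^ 2) * t ^ 2 - ρ ^ 2)) ^ q) ∧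
    (‖(ghat q
          (((η / Real.sqrt (ρ ^ 2 + z ^ 2) : ℝ) : ℂ)
            * (Complex.I * ρ * t - z * Real.sqrt (t ^ 2 - 1))) η φ α β rt)‖
        ≤ rt ^ q
            * ‖(((η / Real.sqrt (ρ ^ 2 + z ^ 2) : ℝ) : ℂ)
                * (ρ * Real.sqrt (t ^ 2 - 1) + Complex.I * z * t))‖ ^ q
            / (Nat.factorial q)
            * Real.sqrt ((ρ ^ 2 + z ^ 2) * t ^ 2 / ((ρ ^ 2 + z ^ 2) * t ^ 2 - ρ ^ 2)) ^ q) :=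
  ghat_bound_on_contour_general ρ z η rt α β φ q t hz hη hrt ht
end

section
/- Let σ: ℂ → ℂ be bounded by M on the right half plane, and suppose a = |r'|, b = |r''| satisfy a + b < r for some r > 0. Then the double series Σₙ Σᵥ c_{nν} with |c_{nν}| ≤ 2πM aⁿ bᵛ (n+ν)!/(r^{n+ν+1} n! ν!) converges absolutely, and its rectangular truncation at order p satisfies |Σ_{n,ν≥0} c_{nν} - Σ_{n=0}^{p} Σ_{ν=0}^{p} c_{nν}| ≤ (4πM/(r - a - b)) ((a+b)/r)^{p+1}. -/
/-!
The majorant `a ^ n * b ^ ν * (n + ν)! / (r ^ (n + ν + 1) * n ! * ν !)` sums along each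
antidiagonal `n + ν = k` to `(a + b) ^ k / r ^ (k + 1)` by the binomial theorem, so its part with
`n + ν ≥ m` sums to the geometric tail `((a + b) / r) ^ m / (r - a - b)`. Off the square
`[0, p]²` one has `n + ν ≥ p + 1`, so the truncation error is at most
`2πM ((a + b) / r) ^ (p + 1) / (r - a - b)`, half the claimed bound.
-/

open Finset
open scoped Nat

theorem hasSum_of_hasSum_sum_antidiagonal {A : Type*} [AddMonoid A] [HasAntidiagonal A]
    {f : A × A → ℝ} (hf : 0 ≤ f) {s : ℝ}
    (h : HasSum (fun k => ∑ x ∈ antidiagonal k, f x) s) : HasSum f s := by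
  rw [← HasAntidiagonal.sigmaAntidiagonalEquivProd.hasSum_iff]
  have hfiber (k : A) : HasSum (fun x : antidiagonal k => f x) (∑ x ∈ antidiagonal k, f x) := by
    simpa only [sum_coe_sort] using hasSum_fintype (fun x : antidiagonal k => f x)
  have hfibers : (fun k => ∑' x : antidiagonal k, f x) = fun k => ∑ x ∈ antidiagonal k, f x :=
    funext fun k => (hfiber k).tsum_eq
  have hsum : Summable (f ∘ HasAntidiagonal.sigmaAntidiagonalEquivProd) :=
    (summable_sigma_of_nonneg fun _ => hf _).2
      ⟨fun k => (hfiber k).summable, hfibers ▸ h.summable⟩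
  exact h.unique (hsum.hasSum.sigma hfiber) ▸ hsum.hasSum

theorem hasSum_geometric_tail {q : ℝ} (h₀ : 0 ≤ q) (h₁ : q < 1) (m : ℕ) :
    HasSum (fun k => if m ≤ k then q ^ k else 0) (q ^ m / (1 - q)) := by
  rw [← (add_left_injective m).hasSum_iff]
  · have hshift : (fun k => if m ≤ k then q ^ k else 0) ∘ (· + m) = fun k => q ^ m * q ^ k :=
      funext fun k => by simp [pow_add, mul_comm]
    rw [hshift, div_eq_mul_inv]
    exact (hasSum_geometric_of_lt_one h₀ h₁).mul_left (q ^ m)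
  · rintro k hk
    rw [if_neg]
    contrapose! hk
    exact ⟨k - m, Nat.sub_add_cancel hk⟩

noncomputable def binomialMajorant (a b r : ℝ) (x : ℕ × ℕ) : ℝ :=
  a ^ x.1 * b ^ x.2 * ((x.1 + x.2)! : ℝ) / (r ^ (x.1 + x.2 + 1) * (x.1 ! : ℝ) * (x.2 ! : ℝ))

section binomialMajorant

variable {a b r : ℝ}

theorem binomialMajorant_nonneg (ha : 0 ≤ a) (hb : 0 ≤ b) (hr : 0 ≤ r) (x : ℕ × ℕ) :
    0 ≤ binomialMajorant a b r x := by
  unfold binomialMajorant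
  positivity

theorem sum_antidiagonal_binomialMajorant (hr : r ≠ 0) (k : ℕ) :
    ∑ x ∈ antidiagonal k, binomialMajorant a b r x = (a + b) ^ k / r ^ (k + 1) := by
  rw [add_pow, sum_div, Nat.sum_antidiagonal_eq_sum_range_succ_mk]
  refine sum_congr rfl fun i hi => ?_
  have hik : i ≤ k := mem_range_succ_iff.mp hi
  have hfac : (k ! : ℝ) = k.choose i * i ! * (k - i)! := by
    exact_mod_cast (Nat.choose_mul_factorial_mul_factorial hik).symm
  simp only [binomialMajorant, Nat.add_sub_cancel' hik, hfac]
  field_simp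

theorem hasSum_binomialMajorant_tail (ha : 0 ≤ a) (hb : 0 ≤ b) (hr : 0 < r) (habr : a + b < r)
    (m : ℕ) :
    HasSum (fun x : ℕ × ℕ => if m ≤ x.1 + x.2 then binomialMajorant a b r x else 0)
      (((a + b) / r) ^ m / (r - a - b)) := by
  refine hasSum_of_hasSum_sum_antidiagonal
    (fun x => ite_nonneg (binomialMajorant_nonneg ha hb hr.le x) le_rfl) ?_
  have hdiag (k : ℕ) : ∑ x ∈ antidiagonal k,
      (if m ≤ x.1 + x.2 then binomialMajorant a b r x else 0)
        = r⁻¹ * if m ≤ k then ((a + b) / r) ^ k else 0 := by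
    rw [sum_congr rfl fun x hx => by rw [mem_antidiagonal.mp hx]]
    split_ifs
    · rw [sum_antidiagonal_binomialMajorant hr.ne', div_pow, pow_succ]; field_simp
    · simp
  have hq : (a + b) / r < 1 := (div_lt_one hr).mpr habr
  simp only [hdiag]
  have hvalue :
      r⁻¹ * (((a + b) / r) ^ m / (1 - (a + b) / r)) = ((a + b) / r) ^ m / (r - a - b) := by
    rw [one_sub_div hr.ne']
    field_simp
    ring
  rw [← hvalue]
  exact (hasSum_geometric_tail (by positivity) hq m).mul_left r⁻¹

end binomialMajorant

theorem double_series_truncation_bound_general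
    (M : ℝ) (hM : 0 < M)
    (r' r'' : EuclideanSpace ℝ (Fin 3)) (a b r : ℝ)
    (hab : a = ‖r'‖) (hbb : b = ‖r''‖) (hr : 0 < r) (habr : a + b < r)
    (c : ℕ → ℕ → ℂ)
    (hc : ∀ n ν : ℕ, ‖c n ν‖
        ≤ 2 * Real.pi * M * a ^ n * b ^ ν * (Nat.factorial (n + ν))
            / (r ^ (n + ν + 1) * (Nat.factorial n) * (Nat.factorial ν)))
    (p : ℕ) :
    Summable (fun nv : ℕ × ℕ => c nv.1 nv.2) ∧
    ‖(∑' nv : ℕ × ℕ, c nv.1 nv.2)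
          - ∑ n ∈ Finset.range (p + 1), ∑ ν ∈ Finset.range (p + 1), c n ν‖
      ≤ (4 * Real.pi * M / (r - a - b)) * ((a + b) / r) ^ (p + 1) := by
  have ha : 0 ≤ a := hab ▸ norm_nonneg _
  have hb : 0 ≤ b := hbb ▸ norm_nonneg _
  set K := 2 * Real.pi * M
  have hbound (x : ℕ × ℕ) : ‖c x.1 x.2‖ ≤ K * binomialMajorant a b r x :=
    (hc x.1 x.2).trans_eq (by simp only [binomialMajorant, mul_div_assoc, mul_assoc])
  have htail (m : ℕ) := (hasSum_binomialMajorant_tail ha hb hr habr m).mul_left K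
  have hsum : Summable (fun x : ℕ × ℕ => c x.1 x.2) :=
    (htail 0).summable.of_norm_bounded fun x => by simpa using hbound x
  refine ⟨hsum, ?_⟩
  set S := range (p + 1) ×ˢ range (p + 1)
  rw [← sum_product', ← hsum.sum_add_tsum_compl (s := S), add_sub_cancel_left,
    _root_.tsum_subtype _ fun x : ℕ × ℕ => c x.1 x.2]
  refine (tsum_of_norm_bounded (htail (p + 1)) fun x => ?_).trans ?_
  · by_cases hx : x ∈ S
    · rw [Set.indicator_of_notMem (by simpa using hx), norm_zero]
      exact mul_nonneg (by positivity) (ite_nonneg (binomialMajorant_nonneg ha hb hr.le x) le_rfl)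
    · have hdeg : p + 1 ≤ x.1 + x.2 := by
        simp only [S, mem_product, mem_range, not_and_or, not_lt] at hx
        omega
      rw [Set.indicator_of_mem (by simpa using hx), if_pos hdeg]
      exact hbound x
  · have hq : 0 ≤ ((a + b) / r) ^ (p + 1) / (r - a - b) :=
      div_nonneg (by positivity) (by linarith)
    rw [mul_comm_div]
    exact mul_le_mul_of_nonneg_right (by linarith [mul_pos Real.pi_pos hM]) hq

theorem double_series_truncation_bound
    (σ : ℂ → ℂ) (M : ℝ) (hM : 0 < M)
    (hσ : ∀ s : ℂ, 0 < s.re → ‖σ s‖ ≤ M)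
    (r' r'' : EuclideanSpace ℝ (Fin 3)) (a b r : ℝ)
    (hab : a = ‖r'‖) (hbb : b = ‖r''‖) (hr : 0 < r) (habr : a + b < r)
    (c : ℕ → ℕ → ℂ)
    (hc : ∀ n ν : ℕ, ‖c n ν‖
        ≤ 2 * Real.pi * M * a ^ n * b ^ ν * (Nat.factorial (n + ν))
            / (r ^ (n + ν + 1) * (Nat.factorial n) * (Nat.factorial ν)))
    (p : ℕ) :
    Summable (fun nv : ℕ × ℕ => c nv.1 nv.2) ∧
    ‖(∑' nv : ℕ × ℕ, c nv.1 nv.2)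
          - ∑ n ∈ Finset.range (p + 1), ∑ ν ∈ Finset.range (p + 1), c n ν‖
      ≤ (4 * Real.pi * M / (r - a - b)) * ((a + b) / r) ^ (p + 1) :=
  double_series_truncation_bound_general M hM r' r'' a b r hab hbb hr habr c hc p
end
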